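/- Let |G⟩ = U|φ,φ⟩ with |φ⟩ = (|0⟩+|1⟩)/√2 and U = Π₀ ⊗ I + Π₁ ⊗ Ū, Ū = e^{-iψ} diag(e^{iθ}, e^{-iθ}). Then the entanglement distance per qubit of |G⟩ equals 1 - cos²θ = sin²θ. -/

import Mathlib

open Complex Matrix BigOperators Finset

noncomputable section

/-- Pauli X. -/
def σx : Matrix (Fin 2) (Fin 2) ℂ := !![0, 1; 1, 0]
/-- Pauli Y. -/
def σy : Matrix (Fin 2) (Fin 2) ℂ := !![0, -I; I, 0]
/-- Pauli Z. -/
def σz : Matrix (Fin 2) (Fin 2) ℂ := !![1, 0; 0, -1]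
/-- Projector on |0⟩. -/
def P0 : Matrix (Fin 2) (Fin 2) ℂ := !![1, 0; 0, 0]
/-- Projector on |1⟩. -/
def P1 : Matrix (Fin 2) (Fin 2) ℂ := !![0, 0; 0, 1]
/-- Ū = e^{-iψ} diag(e^{iθ}, e^{-iθ}). -/
def Ubar (ψ θ : ℝ) : Matrix (Fin 2) (Fin 2) ℂ :=
  Complex.exp (-I * ψ) • !![Complex.exp (I * θ), 0; 0, Complex.exp (-I * θ)]
/-- The single-qubit state |φ⟩ = (|0⟩+|1⟩)/√2. -/
def phi1 : Fin 2 → ℂ := fun _ => 1 / Real.sqrt 2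
/-- The product state |φ⟩^{⊗M}. -/
def prodPhi (M : ℕ) : (Fin M → Fin 2) → ℂ := fun _ => (1 / Real.sqrt 2) ^ M

/-- A single-qubit operator acting on qubit `i` of an `M`-qubit register. -/
def onSite {M : ℕ} (i : Fin M) (A : Matrix (Fin 2) (Fin 2) ℂ) :
    Matrix (Fin M → Fin 2) (Fin M → Fin 2) ℂ :=
  Matrix.of fun x y => A (x i) (y i) * ∏ j ∈ Finset.univ.erase i, (if x j = y j then (1:ℂ) else 0)

/-- `A` on qubit `a` tensored with `B` on qubit `b`, identity elsewhere. -/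
def twoSite {M : ℕ} (a b : Fin M) (A B : Matrix (Fin 2) (Fin 2) ℂ) :
    Matrix (Fin M → Fin 2) (Fin M → Fin 2) ℂ :=
  Matrix.of fun x y => A (x a) (y a) * B (x b) (y b) *
    ∏ j ∈ (Finset.univ.erase a).erase b, (if x j = y j then (1:ℂ) else 0)

/-- The controlled-Ū gate `U_{ab} = Π₀^{(a)} ⊗ I^{(b)} + Π₁^{(a)} ⊗ Ū^{(b)}`. -/
def ctrlU {M : ℕ} (a b : Fin M) (ψ θ : ℝ) : Matrix (Fin M → Fin 2) (Fin M → Fin 2) ℂ :=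
  twoSite a b P0 1 + twoSite a b P1 (Ubar ψ θ)

/-- Expectation value ⟨v|A|v⟩. -/
def expec {n : Type*} [Fintype n] (v : n → ℂ) (A : Matrix n n ℂ) : ℂ :=
  ∑ x, ∑ y, (starRingEnd ℂ) (v x) * A x y * v y

/-- ‖⟨v|σ^{(i)}|v⟩‖², the squared Euclidean norm of the vector of the three
Pauli expectation values on qubit `i`. -/
def pauliNormSq {M : ℕ} (v : (Fin M → Fin 2) → ℂ) (i : Fin M) : ℝ :=
  (expec v (onSite i σx)).re ^ 2 + (expec v (onSite i σy)).re ^ 2 +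
    (expec v (onSite i σz)).re ^ 2

/-- The entanglement distance per qubit. -/
def ED {M : ℕ} (v : (Fin M → Fin 2) → ℂ) : ℝ :=
  1 - (1 / M) * ∑ i, pauliNormSq v i


/-!
The marginal of qubit `i` of a two-qubit state is described by one coherence `z` and a population
imbalance; its Bloch vector is `(2 Re z, 2 Im z, imbalance)`. For a controlled diagonal gate
`diag d` applied to `|+⟩|+⟩` both imbalances vanish and, since `|d₀| = |d₁| = 1`, both coherences
have modulus `|d₀ + d₁| / 4`. For `Ū` the trace is `d₀ + d₁ = 2 e^{-iψ} cos θ`, so each Bloch vector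
has squared length `cos² θ`.
-/

open ComplexConjugate

theorem sum_pi_fin_two {α : Type*} [AddCommMonoid α] (f : (Fin 2 → Fin 2) → α) :
    ∑ x, f x = ∑ a, ∑ b, f ![a, b] := by
  rw [← Fintype.sum_prod_type']
  exact Fintype.sum_equiv (piFinTwoEquiv fun _ => Fin 2) _ _ fun x => by
    congr 1; ext i; fin_cases i <;> rfl

lemma onSite_zero_apply (A : Matrix (Fin 2) (Fin 2) ℂ) (x y : Fin 2 → Fin 2) :
    onSite 0 A x y = A (x 0) (y 0) * if x 1 = y 1 then 1 else 0 := by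
  simp [onSite, show univ.erase (0 : Fin 2) = {1} by decide]

lemma onSite_one_apply (A : Matrix (Fin 2) (Fin 2) ℂ) (x y : Fin 2 → Fin 2) :
    onSite 1 A x y = A (x 1) (y 1) * if x 0 = y 0 then 1 else 0 := by
  simp [onSite, show univ.erase (1 : Fin 2) = {0} by decide]

lemma expec_onSite_zero (v : (Fin 2 → Fin 2) → ℂ) (A : Matrix (Fin 2) (Fin 2) ℂ) :
    expec v (onSite 0 A) = ∑ a, ∑ b, ∑ c, conj (v ![a, c]) * A a b * v ![b, c] := by
  simp only [expec, sum_pi_fin_two, onSite_zero_apply]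
  simp [Fin.sum_univ_two]
  ring

lemma expec_onSite_one (v : (Fin 2 → Fin 2) → ℂ) (A : Matrix (Fin 2) (Fin 2) ℂ) :
    expec v (onSite 1 A) = ∑ a, ∑ b, ∑ c, conj (v ![c, a]) * A a b * v ![c, b] := by
  simp only [expec, sum_pi_fin_two, onSite_one_apply]
  simp [Fin.sum_univ_two]
  ring

lemma pauliNormSq_zero (v : (Fin 2 → Fin 2) → ℂ) :
    pauliNormSq v 0 =
      4 * normSq (conj (v ![0, 0]) * v ![1, 0] + conj (v ![0, 1]) * v ![1, 1]) +
        (normSq (v ![0, 0]) + normSq (v ![0, 1]) - normSq (v ![1, 0]) - normSq (v ![1, 1])) ^ 2 := by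
  simp only [pauliNormSq, expec_onSite_zero, Fin.sum_univ_two]
  simp [σx, σy, σz, normSq_apply]
  ring

lemma pauliNormSq_one (v : (Fin 2 → Fin 2) → ℂ) :
    pauliNormSq v 1 =
      4 * normSq (conj (v ![0, 0]) * v ![0, 1] + conj (v ![1, 0]) * v ![1, 1]) +
        (normSq (v ![0, 0]) + normSq (v ![1, 0]) - normSq (v ![0, 1]) - normSq (v ![1, 1])) ^ 2 := by
  simp only [pauliNormSq, expec_onSite_one, Fin.sum_univ_two]
  simp [σx, σy, σz, normSq_apply]
  ring

/-- The state `(|0⟩|+⟩ + |1⟩ diag(d)|+⟩) / √2`. -/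
def ctrlDiagState (d : Fin 2 → ℂ) : (Fin 2 → Fin 2) → ℂ :=
  fun x => (1 / 2) * if x 0 = 0 then 1 else d (x 1)

lemma ctrlDiagState_zero (d : Fin 2 → ℂ) (b : Fin 2) : ctrlDiagState d ![0, b] = 1 / 2 := by
  simp [ctrlDiagState]

lemma ctrlDiagState_one (d : Fin 2 → ℂ) (b : Fin 2) : ctrlDiagState d ![1, b] = d b / 2 := by
  simp [ctrlDiagState, div_eq_inv_mul]

lemma pauliNormSq_ctrlDiagState {d : Fin 2 → ℂ} (hd : ∀ b, normSq (d b) = 1) (i : Fin 2) :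
    pauliNormSq (ctrlDiagState d) i = normSq (d 0 + d 1) / 4 := by
  have h2 : conj (1 / 2 : ℂ) = 1 / 2 := by rw [map_div₀, map_one, map_ofNat]
  revert i
  rw [Fin.forall_fin_two]
  constructor
  · have hz : conj (1 / 2 : ℂ) * (d 0 / 2) + conj (1 / 2) * (d 1 / 2) = (d 0 + d 1) / 4 := by
      rw [h2]; ring
    simp only [pauliNormSq_zero, ctrlDiagState_zero, ctrlDiagState_one, hz]
    simp [hd]
    ring
  · have hz : conj (1 / 2 : ℂ) * (1 / 2) + conj (d 0 / 2) * (d 1 / 2) =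
        conj (d 0) * (d 0 + d 1) / 4 := by
      rw [h2, map_div₀, map_ofNat, mul_add, ← normSq_eq_conj_mul_self, hd]; push_cast; ring
    simp only [pauliNormSq_one, ctrlDiagState_zero, ctrlDiagState_one, hz]
    simp [hd]
    ring

lemma ED_ctrlDiagState {d : Fin 2 → ℂ} (hd : ∀ b, normSq (d b) = 1) :
    ED (ctrlDiagState d) = 1 - normSq (d 0 + d 1) / 4 := by
  simp only [ED, Fin.sum_univ_two, pauliNormSq_ctrlDiagState hd]
  norm_num
  ring

lemma ctrlU_mulVec_prodPhi (ψ θ : ℝ) :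
    ctrlU 0 1 ψ θ *ᵥ prodPhi 2 = ctrlDiagState fun b => Ubar ψ θ b b := by
  have hs : ((Real.sqrt 2 : ℝ) : ℂ) ^ 2 = 2 := by norm_cast; norm_num
  ext x
  obtain ⟨a, b, rfl⟩ : ∃ a b, x = ![a, b] := ⟨x 0, x 1, by ext i; fin_cases i <;> rfl⟩
  simp only [mulVec, dotProduct, sum_pi_fin_two]
  fin_cases a <;> fin_cases b <;>
    simp [ctrlU, twoSite, P0, P1, Ubar, prodPhi, Fin.sum_univ_two, ctrlDiagState, hs,
      show (univ.erase (0 : Fin 2)).erase 1 = ∅ by decide, Matrix.one_apply] <;> ring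

lemma normSq_Ubar_apply_self (ψ θ : ℝ) (b : Fin 2) : normSq (Ubar ψ θ b b) = 1 := by
  fin_cases b <;> simp [Ubar, normSq_eq_norm_sq, Complex.norm_exp]

lemma normSq_Ubar_trace (ψ θ : ℝ) :
    normSq (Ubar ψ θ 0 0 + Ubar ψ θ 1 1) = 4 * Real.cos θ ^ 2 := by
  have htrace : Ubar ψ θ 0 0 + Ubar ψ θ 1 1 = exp (-I * ψ) * (2 * Real.cos θ) := by
    simp [Ubar, Complex.ofReal_cos, Complex.cos]
    ring_nf
  rw [htrace, normSq_mul, normSq_mul, normSq_ofReal, normSq_eq_norm_sq (exp _), norm_exp]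
  simp
  ring

theorem stmt12 (ψ θ : ℝ) :
    let G := (ctrlU (0 : Fin 2) 1 ψ θ).mulVec (prodPhi 2)
    ED G = 1 - Real.cos θ ^ 2 ∧ ED G = Real.sin θ ^ 2 := by
  intro G
  have hG : G = ctrlDiagState fun b => Ubar ψ θ b b := ctrlU_mulVec_prodPhi ψ θ
  have hED : ED G = 1 - Real.cos θ ^ 2 := by
    rw [hG, ED_ctrlDiagState (normSq_Ubar_apply_self ψ θ), normSq_Ubar_trace]
    ring
  exact ⟨hED, by rw [hED, ← Real.sin_sq_add_cos_sq θ]; ring⟩
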